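/- arXiv:1403.1805 — 6 statements merged into one kernel-verified Lean document; each statement's English description precedes it below -/
import Mathlib

section
/- Let W be a set and let c₁,…,cₘ be the partitioning cylindrification operations arising from a partition of coordinates into blocks of sizes k₁,…,kₘ with n = k₁+⋯+kₘ; that is, cᵢ sends a relation r ⊆ W^{kᵢ} to {x̄ ∈ W^n : the i-th block of x̄ lies in r}. If r₁,s₁ ⊆ W^{k₁}, …, rₘ,sₘ ⊆ W^{kₘ} satisfy ⋂ᵢ cᵢ(rᵢ) ⊆ ⋃ᵢ cᵢ(sᵢ), then rᵢ ⊆ sᵢ for some i. -/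
/-- partitioning cylindrifications on a concrete powerset algebra.
    We identify `W^n` with the product `Π i, W^{k i}` along the partition. -/
theorem partitioning_cylindrification_covering {W : Type*} {m : ℕ} (k : Fin m → ℕ)
    (r s : ∀ i : Fin m, Set (Fin (k i) → W))
    (h : (⋂ i, {x : ∀ i : Fin m, Fin (k i) → W | x i ∈ r i}) ⊆
          ⋃ i, {x : ∀ i : Fin m, Fin (k i) → W | x i ∈ s i}) :
    ∃ i, r i ⊆ s i := by
  by_contra hc
  push_neg at hc
  choose a ha hna using fun i => Set.not_subset.mp (hc i)
  have hx : a ∈ ⋂ i, {x : ∀ i : Fin m, Fin (k i) → W | x i ∈ r i} :=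
    Set.mem_iInter.mpr ha
  obtain ⟨i, hi⟩ := Set.mem_iUnion.mp (h hx)
  exact hna i hi
end

section
/- Let A₀,A₁,A₂,… be bounded distributive lattices with substitution lattice homomorphisms as in the positive quantifier-free signature, satisfying distributivity (axiom 1), preservation of 0,1,∨,∧ by substitutions (axiom 2), and axiom (0). Let n = k₁+⋯+kₘ with partitioning cylindrifications cᵢ : A_{kᵢ} → Aₙ, and let Fⁱ be a prime filter on A_{kᵢ} for each i. Then there exists a prime filter G on Aₙ such that for each i and each r ∈ A_{kᵢ}: cᵢ(r) ∈ G if and only if r ∈ Fⁱ. -/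
/-- `c : ∀ i, Fin (k i) → Fin n` is the family of partitioning cylindrifications for the
    composition `n = k 0 + ⋯ + k (m-1)`. -/
def IsPartitioning {m n : ℕ} (k : Fin m → ℕ) (c : ∀ i : Fin m, Fin (k i) → Fin n) : Prop :=
  n = ∑ t, k t ∧
    ∀ (i : Fin m) (l : Fin (k i)),
      (c i l : ℕ) = (∑ t ∈ Finset.univ.filter (fun t : Fin m => t.val < i.val), k t) + l.val

/-- A prime filter on a bounded distributive lattice. -/
def IsPrimeFilter {A : Type*} [DistribLattice A] [BoundedOrder A] (G : Set A) : Prop :=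
  (⊤ : A) ∈ G ∧ (⊥ : A) ∉ G ∧
    (∀ x y : A, x ∈ G → x ≤ y → y ∈ G) ∧
    (∀ x y : A, x ∈ G → y ∈ G → x ⊓ y ∈ G) ∧
    (∀ x y : A, x ⊔ y ∈ G → x ∈ G ∨ y ∈ G)

/-- Lemma "sum": finitely many prime filters on the sorts of a composition
    can be assembled into one prime filter on the sum sort. -/
theorem assemble_prime_filters (A : ℕ → Type*)
    [∀ n, DistribLattice (A n)] [∀ n, BoundedOrder (A n)]
    (subst : ∀ {k n : ℕ}, (Fin k → Fin n) → A k → A n)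
    (hbot : ∀ {k n : ℕ} (f : Fin k → Fin n), subst f (⊥ : A k) = ⊥)
    (htop : ∀ {k n : ℕ} (f : Fin k → Fin n), subst f (⊤ : A k) = ⊤)
    (hsup : ∀ {k n : ℕ} (f : Fin k → Fin n) (r s : A k),
      subst f (r ⊔ s) = subst f r ⊔ subst f s)
    (hinf : ∀ {k n : ℕ} (f : Fin k → Fin n) (r s : A k),
      subst f (r ⊓ s) = subst f r ⊓ subst f s)
    (axiom0 : ∀ {m n : ℕ} (k : Fin m → ℕ) (c : ∀ i : Fin m, Fin (k i) → Fin n),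
      IsPartitioning k c → ∀ (r s : ∀ i : Fin m, A (k i)),
        Finset.univ.inf (fun i => subst (c i) (r i)) ≤
          Finset.univ.sup (fun i => subst (c i) (s i)) →
        ∃ i, r i ≤ s i)
    {m n : ℕ} (k : Fin m → ℕ) (c : ∀ i : Fin m, Fin (k i) → Fin n)
    (hc : IsPartitioning k c)
    (F : ∀ i : Fin m, Set (A (k i))) (hF : ∀ i, IsPrimeFilter (F i)) :
    ∃ G : Set (A n), IsPrimeFilter G ∧
      ∀ (i : Fin m) (r : A (k i)), subst (c i) r ∈ G ↔ r ∈ F i := by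
  classical
  -- the filter generated by the infima
  set Fset : Set (A n) :=
    {x | ∃ r : ∀ i : Fin m, A (k i), (∀ i, r i ∈ F i) ∧
      Finset.univ.inf (fun i => subst (c i) (r i)) ≤ x} with hFset
  set Iset : Set (A n) :=
    {x | ∃ s : ∀ i : Fin m, A (k i), (∀ i, s i ∉ F i) ∧
      x ≤ Finset.univ.sup (fun i => subst (c i) (s i))} with hIset
  have htopF : ∀ i, (⊤ : A (k i)) ∈ F i := fun i => (hF i).1
  have hbotF : ∀ i, (⊥ : A (k i)) ∉ F i := fun i => (hF i).2.1
  have hupF : ∀ i, ∀ x y : A (k i), x ∈ F i → x ≤ y → y ∈ F i := fun i => (hF i).2.2.1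
  -- Fset is a PFilter
  have FsetUp : ∀ x y : A n, x ∈ Fset → x ≤ y → y ∈ Fset := by
    rintro x y ⟨r, hr, hle⟩ hxy
    exact ⟨r, hr, hle.trans hxy⟩
  have FsetInf : ∀ x y : A n, x ∈ Fset → y ∈ Fset → x ⊓ y ∈ Fset := by
    rintro x y ⟨r, hr, hle⟩ ⟨r', hr', hle'⟩
    refine ⟨fun i => r i ⊓ r' i, fun i => (hF i).2.2.2.1 _ _ (hr i) (hr' i), ?_⟩
    have h1 : Finset.univ.inf (fun i => subst (c i) (r i ⊓ r' i)) ≤ x := by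
      refine le_trans (Finset.inf_mono_fun ?_) hle
      intro i _
      rw [hinf]; exact inf_le_left
    have h2 : Finset.univ.inf (fun i => subst (c i) (r i ⊓ r' i)) ≤ y := by
      refine le_trans (Finset.inf_mono_fun ?_) hle'
      intro i _
      rw [hinf]; exact inf_le_right
    exact le_inf h1 h2
  have FsetNe : (⊤ : A n) ∈ Fset := ⟨fun _ => ⊤, htopF, le_top⟩
  -- Iset is an Ideal
  have IsetDown : ∀ x y : A n, y ∈ Iset → x ≤ y → x ∈ Iset := by
    rintro x y ⟨s, hs, hle⟩ hxy
    exact ⟨s, hs, hxy.trans hle⟩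
  have IsetSup : ∀ x y : A n, x ∈ Iset → y ∈ Iset → x ⊔ y ∈ Iset := by
    rintro x y ⟨s, hs, hle⟩ ⟨s', hs', hle'⟩
    refine ⟨fun i => s i ⊔ s' i, ?_, ?_⟩
    · intro i hmem
      rcases (hF i).2.2.2.2 _ _ hmem with h | h
      · exact hs i h
      · exact hs' i h
    · have h1 : x ≤ Finset.univ.sup (fun i => subst (c i) (s i ⊔ s' i)) := by
        refine hle.trans (Finset.sup_mono_fun ?_)
        intro i _
        rw [hsup]; exact le_sup_left
      have h2 : y ≤ Finset.univ.sup (fun i => subst (c i) (s i ⊔ s' i)) := by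
        refine hle'.trans (Finset.sup_mono_fun ?_)
        intro i _
        rw [hsup]; exact le_sup_right
      exact sup_le h1 h2
  have IsetNe : (⊥ : A n) ∈ Iset := ⟨fun _ => ⊥, hbotF, bot_le⟩
  -- disjointness via axiom (0)
  have hdisj : Disjoint Fset Iset := by
    rw [Set.disjoint_left]
    rintro x ⟨r, hr, hle⟩ ⟨s, hs, hle'⟩
    obtain ⟨i, hi⟩ := axiom0 k c hc r s (hle.trans hle')
    exact hs i (hupF i _ _ (hr i) hi)
  -- package as PFilter and Ideal
  let Fp : Order.PFilter (A n) :=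
    ⟨{ carrier := OrderDual.ofDual ⁻¹' Fset
       lower' := fun x y hxy hx => FsetUp _ _ hx hxy
       nonempty' := ⟨OrderDual.toDual ⊤, FsetNe⟩
       directed' := fun x hx y hy =>
        ⟨OrderDual.toDual (OrderDual.ofDual x ⊓ OrderDual.ofDual y),
          FsetInf _ _ hx hy, inf_le_left, inf_le_right⟩ }⟩
  let Ip : Order.Ideal (A n) :=
    { carrier := Iset
      lower' := fun x y hxy hx => IsetDown _ _ hx hxy
      nonempty' := ⟨⊥, IsetNe⟩
      directed' := fun x hx y hy => ⟨x ⊔ y, IsetSup _ _ hx hy, le_sup_left, le_sup_right⟩ }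
  have hFp : (Fp : Set (A n)) = Fset := rfl
  have hIp : (Ip : Set (A n)) = Iset := rfl
  obtain ⟨J, hJprime, hIJ, hJdisj⟩ :=
    DistribLattice.prime_ideal_of_disjoint_filter_ideal (F := Fp) (I := Ip)
      (by rw [hFp, hIp]; exact hdisj)
  refine ⟨(J : Set (A n))ᶜ, ⟨?_, ?_, ?_, ?_, ?_⟩, ?_⟩
  · exact Set.disjoint_left.mp hJdisj FsetNe
  · simpa using hIJ IsetNe
  · intro x y hx hxy hy
    exact hx (J.lower hxy hy)
  · intro x y hx hy
    intro hmem
    rcases hJprime.mem_or_mem hmem with h | h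
    · exact hx h
    · exact hy h
  · intro x y hxy
    by_contra hcon
    push_neg at hcon
    simp only [Set.mem_compl_iff, not_not] at hcon
    exact hxy (J.sup_mem hcon.1 hcon.2)
  · intro i r
    constructor
    · intro hG
      by_contra hr
      apply hG
      apply hIJ
      show subst (c i) r ∈ Iset
      refine ⟨Function.update (fun j => (⊥ : A (k j))) i r, ?_, ?_⟩
      · intro j
        rcases eq_or_ne j i with rfl | hne
        · rw [Function.update_self]; exact hr
        · rw [Function.update_of_ne hne]; exact hbotF j
      · have := Finset.le_sup (f := fun j => subst (c j) (Function.update (fun j => (⊥ : A (k j))) i r j))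
          (Finset.mem_univ i)
        simpa [Function.update_self] using this
    · intro hr
      have hmemF : subst (c i) r ∈ Fset := by
        refine ⟨Function.update (fun j => (⊤ : A (k j))) i r, ?_, ?_⟩
        · intro j
          rcases eq_or_ne j i with rfl | hne
          · rw [Function.update_self]; exact hr
          · rw [Function.update_of_ne hne]; exact htopF j
        · have := Finset.inf_le (f := fun j => subst (c j) (Function.update (fun j => (⊤ : A (k j))) i r j))
            (Finset.mem_univ i)
          simpa [Function.update_self] using this
      exact Set.disjoint_left.mp hJdisj hmemF
end

section
/- Let A and B be bounded distributive lattices, and suppose c : A → B and e : B → A are monotone maps such that e preserves finite joins (e(0)=0 and e(x∨y)=e(x)∨e(y)), r ≤ c(e(r)) for all r ∈ B, and e(r ∧ c(s)) = e(r) ∧ s for all r ∈ B, s ∈ A. Let F be a prime filter on A and r ∈ B with e(r) ∈ F. Then there is a prime filter G on B with r ∈ G and, for all u ∈ A, c(u) ∈ G if and only if u ∈ F. -/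
/-- Lemma "project", abstract form. -/
theorem project_prime_filter {A B : Type*}
    [DistribLattice A] [BoundedOrder A] [DistribLattice B] [BoundedOrder B]
    (c : A → B) (e : B → A)
    (hcmono : Monotone c) (hemono : Monotone e)
    (hebot : e ⊥ = ⊥) (hesup : ∀ x y : B, e (x ⊔ y) = e x ⊔ e y)
    (hle : ∀ r : B, r ≤ c (e r))
    (hme : ∀ (r : B) (s : A), e (r ⊓ c s) = e r ⊓ s)
    (F : Set A) (hF : IsPrimeFilter F) (r : B) (hr : e r ∈ F) :
    ∃ G : Set B, IsPrimeFilter G ∧ r ∈ G ∧ ∀ u : A, c u ∈ G ↔ u ∈ F := by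
  obtain ⟨htop, hbot, hup, hinf, hsup⟩ := hF
  -- e (c v) ≤ v
  have hecv : ∀ v : A, e (c v) ≤ v := by
    intro v
    have := hme ⊤ v
    rw [top_inf_eq] at this
    rw [this]
    exact inf_le_right
  -- the filter F0 = {b | ∃ u ∈ F, r ⊓ c u ≤ b}
  set F0 : Set B := {b | ∃ u ∈ F, r ⊓ c u ≤ b} with hF0def
  have hF0 : Order.IsPFilter F0 := by
    apply Order.IsPFilter.of_def
    · exact ⟨⊤, ⟨⊤, htop, le_top⟩⟩
    · rintro x ⟨u, hu, hux⟩ y ⟨v, hv, hvy⟩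
      refine ⟨(r ⊓ c u) ⊓ (r ⊓ c v), ⟨u ⊓ v, hinf u v hu hv, ?_⟩,
        le_trans inf_le_left hux, le_trans inf_le_right hvy⟩
      exact le_inf (inf_le_inf_left r (hcmono inf_le_left))
        (inf_le_inf_left r (hcmono inf_le_right))
    · rintro x y hxy ⟨u, hu, hux⟩
      exact ⟨u, hu, le_trans hux hxy⟩
  -- the ideal I0 = {b | ∃ v ∉ F, b ≤ c v}
  set I0 : Set B := {b | ∃ v, v ∉ F ∧ b ≤ c v} with hI0def
  have hI0 : Order.IsIdeal I0 := by
    constructor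
    · rintro x y hyx ⟨v, hv, hxv⟩
      exact ⟨v, hv, le_trans hyx hxv⟩
    · exact ⟨⊥, ⟨⊥, hbot, bot_le⟩⟩
    · rintro x ⟨v, hv, hxv⟩ y ⟨w, hw, hyw⟩
      refine ⟨c (v ⊔ w), ⟨v ⊔ w, fun h => ?_, le_rfl⟩,
        le_trans hxv (hcmono le_sup_left), le_trans hyw (hcmono le_sup_right)⟩
      rcases hsup v w h with h' | h' <;> [exact hv h'; exact hw h']
  -- F0 and I0 are disjoint
  have hdisj : Disjoint (F0 : Set B) (I0 : Set B) := by
    rw [Set.disjoint_left]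
    rintro b ⟨u, hu, hub⟩ ⟨v, hv, hbv⟩
    apply hv
    have h1 : e r ⊓ u ≤ v := by
      rw [← hme r u]
      exact le_trans (hemono (le_trans hub hbv)) (hecv v)
    exact hup _ _ (hinf _ _ hr hu) h1
  have hdisj' : Disjoint ((hF0.toPFilter : Order.PFilter B) : Set B)
      ((hI0.toIdeal : Order.Ideal B) : Set B) := hdisj
  obtain ⟨J, hJprime, hIJ, hJdisj⟩ :=
    DistribLattice.prime_ideal_of_disjoint_filter_ideal hdisj'
  have hFnotJ : ∀ b : B, b ∈ F0 → b ∉ (J : Set B) := fun b hb =>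
    Set.disjoint_left.mp hJdisj hb
  refine ⟨(J : Set B)ᶜ, ⟨?_, ?_, ?_, ?_, ?_⟩, ?_, ?_⟩
  · exact hFnotJ ⊤ ⟨⊤, htop, le_top⟩
  · simpa using J.bot_mem
  · intro x y hx hxy hy
    exact hx (J.lower hxy hy)
  · intro x y hx hy h
    rcases hJprime.mem_or_mem h with h' | h' <;> [exact hx h'; exact hy h']
  · intro x y h
    by_contra hc
    push_neg at hc
    simp only [Set.mem_compl_iff, not_not] at hc h
    exact h (Order.Ideal.sup_mem hc.1 hc.2)
  · exact hFnotJ r ⟨⊤, htop, le_trans inf_le_left le_rfl⟩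
  · intro u
    constructor
    · intro hcu
      by_contra hu
      exact hcu (hIJ ⟨u, hu, le_rfl⟩)
    · intro hu
      exact hFnotJ (c u) ⟨u, hu, inf_le_right⟩
end

section
/- Let L be a multisorted algebra in the positive quantifier-free signature satisfying axioms (1)-(3): each sort Aₙ is a bounded distributive lattice, each substitution α : A_k → A_n preserves 0,1,∨,∧, and compositions of substitutions compose correctly. Let F be a prime filter on sort n. Let W = {F₁,…,Fₙ} be an n-element set and A(W) the concrete algebra of all relations on W. Then the map φ defined sortwise by φ(r) = {α^tuple(F₁,…,Fₙ) : α : k → n a substitution with α(r) ∈ F}, for r in sort k, is a homomorphism of the multisorted signature (preserving 0, 1, ∨, ∧, and all substitutions). -/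
/-- Lemma "morphism": a prime filter `F` on sort `n` yields a morphism to the
    concrete algebra of relations on the `n`-element set `W = Fin n` (identifying a `k`-tuple
    from `W` with the substitution `Fin k → Fin n` it determines, so that
    `α^tuple(F̄) ∈ φ(r) ↔ α(r) ∈ F`). -/
theorem prime_filter_morphism (A : ℕ → Type*)
    [∀ n, DistribLattice (A n)] [∀ n, BoundedOrder (A n)]
    (subst : ∀ {k n : ℕ}, (Fin k → Fin n) → A k → A n)
    (hbot : ∀ {k n : ℕ} (f : Fin k → Fin n), subst f (⊥ : A k) = ⊥)
    (htop : ∀ {k n : ℕ} (f : Fin k → Fin n), subst f (⊤ : A k) = ⊤)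
    (hsup : ∀ {k n : ℕ} (f : Fin k → Fin n) (r s : A k),
      subst f (r ⊔ s) = subst f r ⊔ subst f s)
    (hinf : ∀ {k n : ℕ} (f : Fin k → Fin n) (r s : A k),
      subst f (r ⊓ s) = subst f r ⊓ subst f s)
    (hcomp : ∀ {k n j : ℕ} (f : Fin k → Fin n) (g : Fin n → Fin j) (r : A k),
      subst g (subst f r) = subst (g ∘ f) r)
    {n : ℕ} (F : Set (A n)) (hF : IsPrimeFilter F)
    (φ : ∀ k : ℕ, A k → Set (Fin k → Fin n))
    (hφ : ∀ (k : ℕ) (r : A k), φ k r = {g : Fin k → Fin n | subst g r ∈ F}) :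
    (∀ k : ℕ, φ k (⊥ : A k) = ∅) ∧
    (∀ k : ℕ, φ k (⊤ : A k) = Set.univ) ∧
    (∀ (k : ℕ) (r s : A k), φ k (r ⊔ s) = φ k r ∪ φ k s) ∧
    (∀ (k : ℕ) (r s : A k), φ k (r ⊓ s) = φ k r ∩ φ k s) ∧
    (∀ (k j : ℕ) (f : Fin k → Fin j) (r : A k),
      φ j (subst f r) = {x : Fin j → Fin n | x ∘ f ∈ φ k r}) := by
  obtain ⟨htopF, hbotF, hup, hmeet, hprime⟩ := hF
  refine ⟨?_, ?_, ?_, ?_, ?_⟩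
  · intro k
    ext g
    simp [hφ, hbot, hbotF]
  · intro k
    ext g
    simp [hφ, htop, htopF]
  · intro k r s
    ext g
    simp only [hφ, hsup, Set.mem_setOf_eq, Set.mem_union]
    constructor
    · exact hprime _ _
    · rintro (h | h)
      · exact hup _ _ h le_sup_left
      · exact hup _ _ h le_sup_right
  · intro k r s
    ext g
    simp only [hφ, hinf, Set.mem_setOf_eq, Set.mem_inter_iff]
    exact ⟨fun h => ⟨hup _ _ h inf_le_left, hup _ _ h inf_le_right⟩,
      fun ⟨h1, h2⟩ => hmeet _ _ h1 h2⟩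
  · intro k j f r
    ext g
    simp [hφ, hcomp]
end

section
/- Let L be an algebra satisfying the equational theory of quantifier-free algebras (axioms (1)-(6): each sort is a Boolean algebra, substitutions are Boolean homomorphisms composing functorially with id(r)=r). Suppose further that sort 0 of L has exactly two elements 0 ≠ 1, and that the full Horn clause theory of first order algebras holds in L (including projections with ∃^(k)(t) = 0 ⇔ t = 0 and ⋀ᵢ ∃^(kᵢ)(tᵢ) = 1 ⟹ ∃^(n)(⋀ᵢ cᵢ(tᵢ)) = 1). Then axiom (0) holds in L: for partitioning cylindrifications c₁,…,cₘ, if ⋁ᵢ cᵢ(sᵢ) ≥ ⋀ᵢ cᵢ(rᵢ) then sᵢ ≥ rᵢ for some i. -/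
/-- Iterated projection `∃^(k) : A k → A 0`. -/
def exIter (A : ℕ → Type*) (ex : ∀ n : ℕ, A (n + 1) → A n) : ∀ k : ℕ, A k → A 0
  | 0, t => t
  | k + 1, t => exIter A ex k (ex k t)

/-- in a model of the Horn clause theory of first order algebras whose
    sort 0 has exactly two elements, axiom (0) holds. -/
theorem axiom0_from_complete (A : ℕ → Type*)
    [∀ n, BooleanAlgebra (A n)]
    (subst : ∀ {k n : ℕ}, (Fin k → Fin n) → A k → A n)
    (ex : ∀ n : ℕ, A (n + 1) → A n)
    (hbot : ∀ {k n : ℕ} (f : Fin k → Fin n), subst f (⊥ : A k) = ⊥)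
    (htop : ∀ {k n : ℕ} (f : Fin k → Fin n), subst f (⊤ : A k) = ⊤)
    (hsup : ∀ {k n : ℕ} (f : Fin k → Fin n) (r s : A k),
      subst f (r ⊔ s) = subst f r ⊔ subst f s)
    (hinf : ∀ {k n : ℕ} (f : Fin k → Fin n) (r s : A k),
      subst f (r ⊓ s) = subst f r ⊓ subst f s)
    (hcompl : ∀ {k n : ℕ} (f : Fin k → Fin n) (r : A k), subst f rᶜ = (subst f r)ᶜ)
    (hcomp : ∀ {k n j : ℕ} (f : Fin k → Fin n) (g : Fin n → Fin j) (r : A k),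
      subst g (subst f r) = subst (g ∘ f) r)
    (hid : ∀ {n : ℕ} (r : A n), subst (id : Fin n → Fin n) r = r)
    -- sort 0 has exactly two elements
    (hbotne : (⊥ : A 0) ≠ ⊤)
    (htwo : ∀ x : A 0, x = ⊥ ∨ x = ⊤)
    -- the relevant Horn clauses of the Horn clause theory of first order algebras
    (hTN : ∀ {n : ℕ} (t u : A n), t ⊓ uᶜ = ⊥ → t ≤ u)
    (hEx0 : ∀ {k : ℕ} (t : A k), exIter A ex k t = ⊥ ↔ t = ⊥)
    (hExTop : ∀ {m n : ℕ} (k : Fin m → ℕ) (c : ∀ i : Fin m, Fin (k i) → Fin n),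
      IsPartitioning k c → ∀ t : ∀ i : Fin m, A (k i),
        Finset.univ.inf (fun i => exIter A ex (k i) (t i)) = ⊤ →
        exIter A ex n (Finset.univ.inf (fun i => subst (c i) (t i))) = ⊤) :
    -- axiom (0)
    ∀ {m n : ℕ} (k : Fin m → ℕ) (c : ∀ i : Fin m, Fin (k i) → Fin n),
      IsPartitioning k c → ∀ (r s : ∀ i : Fin m, A (k i)),
        Finset.univ.inf (fun i => subst (c i) (r i)) ≤
          Finset.univ.sup (fun i => subst (c i) (s i)) →
        ∃ i, r i ≤ s i := by
  intro m n k c hc r s h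
  by_contra hno
  push_neg at hno
  set t : ∀ i : Fin m, A (k i) := fun i => r i ⊓ (s i)ᶜ with ht
  have htne : ∀ i, t i ≠ ⊥ := by
    intro i hbot'
    exact hno i (hTN _ _ hbot')
  have hexTop : ∀ i, exIter A ex (k i) (t i) = ⊤ := by
    intro i
    rcases htwo (exIter A ex (k i) (t i)) with h0 | h1
    · exact absurd ((hEx0 _).mp h0) (htne i)
    · exact h1
  have hinfTop : Finset.univ.inf (fun i => exIter A ex (k i) (t i)) = ⊤ := by
    rw [Finset.inf_eq_top_iff]
    exact fun i _ => hexTop i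
  have hEt := hExTop k c hc t hinfTop
  have hne : Finset.univ.inf (fun i => subst (c i) (t i)) ≠ ⊥ := by
    intro hb
    rw [(hEx0 _).mpr hb] at hEt
    exact hbotne hEt
  apply hne
  have hle : Finset.univ.inf (fun i => subst (c i) (t i)) ≤
      Finset.univ.sup (fun i => subst (c i) (s i)) ⊓
      (Finset.univ.sup (fun i => subst (c i) (s i)))ᶜ := by
    apply le_inf
    · refine le_trans ?_ h
      apply Finset.le_inf
      intro i _
      refine le_trans (Finset.inf_le (Finset.mem_univ i)) ?_
      rw [ht, hinf]
      exact inf_le_left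
    · rw [← compl_le_compl_iff_le, compl_compl]
      apply Finset.sup_le
      intro i _
      rw [← compl_le_compl_iff_le, compl_compl]
      refine le_trans (Finset.inf_le (Finset.mem_univ i)) ?_
      rw [ht, hinf, hcompl]
      exact inf_le_right
  rw [inf_compl_eq_bot] at hle
  exact le_bot_iff.mp hle
end

section
/- Let W be a one-element set and A(W) the quantifier-free algebra of relations on W (each sort 𝒫(Wⁿ) is a two-element Boolean algebra). Then the product algebra L = A(W) × A(W) fails axiom (0): there exist partitioning cylindrifications c₁, c₂ : 1 → 2 and elements a, b of sort 1 of L with c₁(b) ∨ c₂(0) ≥ c₁(a) ∧ c₂(b), yet b ≱ a and 0 ≱ b. -/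
/-- Sort `n` of the product algebra `L = A(W) × A(W)` for the one-element set `W = Unit`. -/
abbrev LSort (n : ℕ) : Type :=
  Set (Fin n → Unit) × Set (Fin n → Unit)

/-- The substitution operation of the concrete algebra, applied coordinatewise in the product. -/
def Lsubst {k n : ℕ} (f : Fin k → Fin n) (r : LSort k) : LSort n :=
  ({x | x ∘ f ∈ r.1}, {x | x ∘ f ∈ r.2})

/-- The first partitioning cylindrification `c₁ : 1 → 2`, `c₁(r) = {(x,y) : x ∈ r}`. -/
def c₁ (r : LSort 1) : LSort 2 := Lsubst (fun _ => (0 : Fin 2)) r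

/-- The second partitioning cylindrification `c₂ : 1 → 2`, `c₂(r) = {(x,y) : y ∈ r}`. -/
def c₂ (r : LSort 1) : LSort 2 := Lsubst (fun _ => (1 : Fin 2)) r

/-- the product of two quantifier-free algebras on a one-element set
    fails axiom (0). -/
theorem product_fails_axiom0 :
    ∃ a b : LSort 1,
      c₁ a ⊓ c₂ b ≤ c₁ b ⊔ c₂ (⊥ : LSort 1) ∧ ¬ a ≤ b ∧ ¬ b ≤ (⊥ : LSort 1) := by
  refine ⟨(Set.univ, ∅), (∅, Set.univ), ?_, ?_, ?_⟩
  · constructor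
    · intro x hx; exact absurd hx.2 (fun h => h)
    · intro x hx; exact absurd hx.1 (fun h => h)
  · intro h
    exact h.1 (Set.mem_univ (fun _ => ())) 
  · intro h
    exact h.2 (Set.mem_univ (fun _ => ()))
end
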